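/- arXiv:2411.08145 — 3 statements merged into one kernel-verified Lean document; each statement's English description precedes it below -/
import Mathlib

section
/- The stationary process S_t = Ū + (κν/(κ-η)) ∫_{-∞}^t (e^{-η(t-s)} - e^{-κ(t-s)}) dW^U_s + σ ∫_{-∞}^t e^{-κ(t-s)} dW^S_s, where W^U and W^S are independent two-sided Brownian motions, has mean E[S_t] = Ū and covariance Cov(S_t, S_s) = (1/2)·(κ²/(η(κ²-η²)))·ν² e^{-η|t-s|} + (1/2)·(σ²/κ − κν²/(κ²-η²)) e^{-κ|t-s|} for all t, s. -/
/-!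
After centering, `S_t - Ū = c GU_t + σ GS_t` with `c = κν/(κ-η)`, and the cross terms vanish, so
the covariance is `c² E[GU_t GU_s] + σ² E[GS_t GS_s]`. By the Itô isometry both are integrals over
`(-∞, min t s]` of sums of products `e^{-a(t-u)} e^{-b(s-u)}`, each of which integrates to
`e^{-a(t-m)} e^{-b(s-m)} / (a+b)` at `m = min t s`. The mixed terms (`a ≠ b`) only depend on
`|t - s|` once they are paired with their swap `a ↔ b`.
-/

open Real MeasureTheory Set

lemma exp_mul_exp_eq_exp_mul_exp (a b t s u : ℝ) :
    exp (-a * (t - u)) * exp (-b * (s - u)) = exp (-(a * t + b * s)) * exp ((a + b) * u) := by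
  rw [← exp_add, ← exp_add]
  ring_nf

section ExponentialKernels

variable {a b : ℝ}

lemma integrableOn_Iic_exp_mul_exp (hab : 0 < a + b) (t s m : ℝ) :
    IntegrableOn (fun u => exp (-a * (t - u)) * exp (-b * (s - u))) (Iic m) := by
  simp_rw [exp_mul_exp_eq_exp_mul_exp a b t s]
  exact (integrableOn_exp_mul_Iic hab m).const_mul _

lemma integral_Iic_exp_mul_exp (hab : 0 < a + b) (t s m : ℝ) :
    ∫ u in Iic m, exp (-a * (t - u)) * exp (-b * (s - u))
      = exp (-a * (t - m)) * exp (-b * (s - m)) / (a + b) := by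
  simp_rw [exp_mul_exp_eq_exp_mul_exp a b t s]
  rw [integral_const_mul, integral_exp_mul_Iic hab, mul_div_assoc]

lemma integral_Iic_min_exp_mul_exp_self (ha : 0 < a) (t s : ℝ) :
    ∫ u in Iic (min t s), exp (-a * (t - u)) * exp (-a * (s - u))
      = exp (-a * |t - s|) / (2 * a) := by
  rw [integral_Iic_exp_mul_exp (by linarith), ← exp_add, ← max_sub_min_eq_abs', two_mul]
  congr 2
  linear_combination a * min_add_max t s

lemma integral_Iic_min_exp_mul_exp_add_swap (hab : 0 < a + b) (t s : ℝ) :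
    ∫ u in Iic (min t s),
        (exp (-a * (t - u)) * exp (-b * (s - u)) + exp (-b * (t - u)) * exp (-a * (s - u)))
      = (exp (-a * |t - s|) + exp (-b * |t - s|)) / (a + b) := by
  have hba : 0 < b + a := by linarith
  rw [integral_add (integrableOn_Iic_exp_mul_exp hab t s _)
      (integrableOn_Iic_exp_mul_exp hba t s _),
    integral_Iic_exp_mul_exp hab, integral_Iic_exp_mul_exp hba, add_comm b a, ← add_div]
  rcases le_total t s with h | h
  · rw [min_eq_left h, abs_sub_comm, abs_of_nonneg (sub_nonneg.2 h)]
    simp only [sub_self, mul_zero, exp_zero, one_mul]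
    ring
  · rw [min_eq_right h, abs_of_nonneg (sub_nonneg.2 h)]
    simp only [sub_self, mul_zero, exp_zero, mul_one]

lemma integral_Iic_min_exp_sub_exp_mul_exp_sub_exp (ha : 0 < a) (hb : 0 < b) (t s : ℝ) :
    ∫ u in Iic (min t s),
        (exp (-a * (t - u)) - exp (-b * (t - u))) * (exp (-a * (s - u)) - exp (-b * (s - u)))
      = exp (-a * |t - s|) / (2 * a)
        - (exp (-a * |t - s|) + exp (-b * |t - s|)) / (a + b)
        + exp (-b * |t - s|) / (2 * b) := by
  have hab : 0 < a + b := by linarith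
  have expand : ∀ u, (exp (-a * (t - u)) - exp (-b * (t - u)))
      * (exp (-a * (s - u)) - exp (-b * (s - u)))
      = exp (-a * (t - u)) * exp (-a * (s - u))
        - (exp (-a * (t - u)) * exp (-b * (s - u)) + exp (-b * (t - u)) * exp (-a * (s - u)))
        + exp (-b * (t - u)) * exp (-b * (s - u)) := fun u => by ring
  have hint : ∀ c d, 0 < c + d → Integrable (fun u => exp (-c * (t - u)) * exp (-d * (s - u)))
      (volume.restrict (Iic (min t s))) :=
    fun c d hcd => integrableOn_Iic_exp_mul_exp hcd t s _
  have haa := hint a a (by linarith)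
  have hab' := hint a b hab
  have hba := hint b a (by linarith)
  have hbb := hint b b (by linarith)
  simp_rw [expand]
  rw [integral_add (by fun_prop) (by fun_prop), integral_sub (by fun_prop) (by fun_prop),
    integral_Iic_min_exp_mul_exp_self ha, integral_Iic_min_exp_mul_exp_add_swap hab,
    integral_Iic_min_exp_mul_exp_self hb]

end ExponentialKernels

lemma integral_add_mul_add_of_memLp {Ω : Type*} [MeasurableSpace Ω] {μ : Measure Ω}
    {X Y X' Y' : Ω → ℝ} (hX : MemLp X 2 μ) (hY : MemLp Y 2 μ) (hX' : MemLp X' 2 μ)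
    (hY' : MemLp Y' 2 μ) (a b a' b' : ℝ) :
    ∫ ω, (a * X ω + b * Y ω) * (a' * X' ω + b' * Y' ω) ∂μ
      = a * a' * ∫ ω, X ω * X' ω ∂μ + a * b' * ∫ ω, X ω * Y' ω ∂μ
        + b * a' * ∫ ω, Y ω * X' ω ∂μ + b * b' * ∫ ω, Y ω * Y' ω ∂μ := by
  have hXX' : Integrable (fun ω => X ω * X' ω) μ := hX.integrable_mul hX'
  have hXY' : Integrable (fun ω => X ω * Y' ω) μ := hX.integrable_mul hY'
  have hYX' : Integrable (fun ω => Y ω * X' ω) μ := hY.integrable_mul hX'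
  have hYY' : Integrable (fun ω => Y ω * Y' ω) μ := hY.integrable_mul hY'
  have expand : ∀ ω, (a * X ω + b * Y ω) * (a' * X' ω + b' * Y' ω)
      = a * a' * (X ω * X' ω) + a * b' * (X ω * Y' ω)
        + b * a' * (Y ω * X' ω) + b * b' * (Y ω * Y' ω) := fun ω => by ring
  simp_rw [expand]
  rw [integral_add (by fun_prop) (by fun_prop), integral_add (by fun_prop) (by fun_prop),
    integral_add (by fun_prop) (by fun_prop)]
  simp only [integral_const_mul]

theorem stationary_nested_OU_mean_and_cov_general
    {Ω : Type*} [MeasurableSpace Ω] (μ : Measure Ω) [IsProbabilityMeasure μ]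
    (κ η σ ν Ubar : ℝ) (hη : 0 < η) (hκη : η < κ)
    (GU GS : ℝ → Ω → ℝ)
    (hL2 : ∀ t, MemLp (GU t) 2 μ ∧ MemLp (GS t) 2 μ)
    (hmean : ∀ t, (∫ ω, GU t ω ∂μ) = 0 ∧ (∫ ω, GS t ω ∂μ) = 0)
    (hcovU : ∀ t s, (∫ ω, GU t ω * GS s ω ∂μ) = 0)
    (hisoU : ∀ t s, (∫ ω, GU t ω * GU s ω ∂μ)
      = ∫ u in Set.Iic (min t s),
          (Real.exp (-η * (t - u)) - Real.exp (-κ * (t - u)))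
            * (Real.exp (-η * (s - u)) - Real.exp (-κ * (s - u))))
    (hisoS : ∀ t s, (∫ ω, GS t ω * GS s ω ∂μ)
      = ∫ u in Set.Iic (min t s), Real.exp (-κ * (t - u)) * Real.exp (-κ * (s - u)))
    (S : ℝ → Ω → ℝ)
    (hS : ∀ t ω, S t ω = Ubar + κ * ν / (κ - η) * GU t ω + σ * GS t ω) :
    ∀ t s : ℝ,
      (∫ ω, S t ω ∂μ) = Ubar ∧
      (∫ ω, (S t ω - Ubar) * (S s ω - Ubar) ∂μ)
        = 1 / 2 * (κ ^ 2 / (η * (κ ^ 2 - η ^ 2))) * ν ^ 2 * Real.exp (-η * |t - s|)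
          + 1 / 2 * (σ ^ 2 / κ - κ * ν ^ 2 / (κ ^ 2 - η ^ 2)) * Real.exp (-κ * |t - s|) := by
  intro t s
  have hκ : 0 < κ := hη.trans hκη
  set c := κ * ν / (κ - η) with hc
  have hUt : Integrable (GU t) μ := (hL2 t).1.integrable one_le_two
  have hSt : Integrable (GS t) μ := (hL2 t).2.integrable one_le_two
  have hcross : ∫ ω, GS t ω * GU s ω ∂μ = 0 := by
    simp_rw [mul_comm (GS t _)]
    exact hcovU s t
  have hcentered : ∀ r ω, S r ω - Ubar = c * GU r ω + σ * GS r ω := fun r ω => by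
    rw [hS]
    ring
  refine ⟨?_, ?_⟩
  · simp_rw [hS]
    rw [integral_add (by fun_prop) (by fun_prop), integral_add (by fun_prop) (by fun_prop),
      integral_const_mul, integral_const_mul, (hmean t).1, (hmean t).2]
    simp
  · simp_rw [hcentered]
    rw [integral_add_mul_add_of_memLp (hL2 t).1 (hL2 t).2 (hL2 s).1 (hL2 s).2, hcovU, hcross,
      hisoU, hisoS, integral_Iic_min_exp_sub_exp_mul_exp_sub_exp hη hκ,
      integral_Iic_min_exp_mul_exp_self hκ, hc]
    have hκη_sub : κ - η ≠ 0 := by linarith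
    have hκη_add : κ + η ≠ 0 := by linarith
    have hκη_sq : κ ^ 2 - η ^ 2 ≠ 0 := by nlinarith
    field_simp
    ring

/-- The stationary process
`S_t = Ū + (κν/(κ-η)) ∫_{-∞}^t (e^{-η(t-s)}-e^{-κ(t-s)}) dW^U_s + σ ∫_{-∞}^t e^{-κ(t-s)} dW^S_s`
has mean `Ū` and covariance
`Cov(S_t,S_s) = (1/2)(κ²/(η(κ²-η²)))ν² e^{-η|t-s|} + (1/2)(σ²/κ - κν²/(κ²-η²)) e^{-κ|t-s|}`.
The two Wiener-integral processes `GU` and `GS` are characterized by their mean-zero,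
Itô-isometry covariance and independence properties. -/
theorem stationary_nested_OU_mean_and_cov
    {Ω : Type*} [MeasurableSpace Ω] (μ : Measure Ω) [IsProbabilityMeasure μ]
    (κ η σ ν Ubar : ℝ) (hη : 0 < η) (hκη : η < κ) (hσ : 0 < σ) (hν : 0 < ν)
    (GU GS : ℝ → Ω → ℝ)
    (hL2 : ∀ t, MemLp (GU t) 2 μ ∧ MemLp (GS t) 2 μ)
    (hmean : ∀ t, (∫ ω, GU t ω ∂μ) = 0 ∧ (∫ ω, GS t ω ∂μ) = 0)
    (hcovU : ∀ t s, (∫ ω, GU t ω * GS s ω ∂μ) = 0)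
    (hisoU : ∀ t s, (∫ ω, GU t ω * GU s ω ∂μ)
      = ∫ u in Set.Iic (min t s),
          (Real.exp (-η * (t - u)) - Real.exp (-κ * (t - u)))
            * (Real.exp (-η * (s - u)) - Real.exp (-κ * (s - u))))
    (hisoS : ∀ t s, (∫ ω, GS t ω * GS s ω ∂μ)
      = ∫ u in Set.Iic (min t s), Real.exp (-κ * (t - u)) * Real.exp (-κ * (s - u)))
    (S : ℝ → Ω → ℝ)
    (hS : ∀ t ω, S t ω = Ubar + κ * ν / (κ - η) * GU t ω + σ * GS t ω) :
    ∀ t s : ℝ,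
      (∫ ω, S t ω ∂μ) = Ubar ∧
      (∫ ω, (S t ω - Ubar) * (S s ω - Ubar) ∂μ)
        = 1 / 2 * (κ ^ 2 / (η * (κ ^ 2 - η ^ 2))) * ν ^ 2 * Real.exp (-η * |t - s|)
          + 1 / 2 * (σ ^ 2 / κ - κ * ν ^ 2 / (κ ^ 2 - η ^ 2)) * Real.exp (-κ * |t - s|) :=
  stationary_nested_OU_mean_and_cov_general μ κ η σ ν Ubar hη hκη GU GS hL2 hmean hcovU hisoU hisoS
    S hS
end

section
/- The stationary covariance function of the nested OU process, C(τ) = (1/2)(κ²ν²/(η(κ²-η²))) e^{-η|τ|} + (1/2)(σ²/κ − κν²/(κ²-η²)) e^{-κ|τ|} with κ > η > 0, σ, ν > 0, is a positive semidefinite function on ℝ; in particular the variance C(0) = (1/2)(κ²ν²/(η(κ²-η²))) + (1/2)(σ²/κ − κν²/(κ²-η²)) is positive. -/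
/-!
Write `e_a(s) = 𝟙_{(-∞, s]} e^{-a (s - ·)} ∈ L²(ℝ)`, the kernel of the stationary OU process of
rate `a` against white noise. Then
`⟪e_a(s), e_b(t)⟫ = e^{-a (s - s ∧ t) - b (t - s ∧ t)} / (a + b)`, and with `α = κν / (κ - η)`
`C(s - t) = ⟪σ e_κ(s), σ e_κ(t)⟫ + ⟪α (e_η(s) - e_κ(s)), α (e_η(t) - e_κ(t))⟫`.
So every matrix `(C(t_i - t_j))` is a sum of two Gram matrices, and
`C(0) ≥ ‖σ e_κ(0)‖² = σ² / (2κ)`.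
-/

open Real

/-- The stationary covariance function of the nested OU process. -/
noncomputable def Ccov (κ η σ ν : ℝ) (τ : ℝ) : ℝ :=
  1 / 2 * (κ ^ 2 * ν ^ 2 / (η * (κ ^ 2 - η ^ 2))) * Real.exp (-η * |τ|)
    + 1 / 2 * (σ ^ 2 / κ - κ * ν ^ 2 / (κ ^ 2 - η ^ 2)) * Real.exp (-κ * |τ|)

open MeasureTheory Set
open scoped InnerProductSpace

noncomputable def causalExp (a s : ℝ) : ℝ → ℝ :=
  (Iic s).indicator fun u => exp (a * (u - s))

lemma causalExp_mul_causalExp (a b s t : ℝ) :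
    (fun u => causalExp a s u * causalExp b t u) =
      (Iic (min s t)).indicator fun u => exp (-(a * s + b * t)) * exp ((a + b) * u) := by
  funext u
  simp only [causalExp, indicator_apply, mem_Iic, le_min_iff]
  split_ifs <;> simp_all [← exp_add]
  ring_nf

variable {a b : ℝ}

lemma integrable_causalExp_mul (hab : 0 < a + b) (s t : ℝ) :
    Integrable fun u => causalExp a s u * causalExp b t u := by
  rw [causalExp_mul_causalExp, integrable_indicator_iff measurableSet_Iic]
  exact (integrableOn_exp_mul_Iic hab _).const_mul _

lemma integral_causalExp_mul (hab : 0 < a + b) (s t : ℝ) :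
    ∫ u, causalExp a s u * causalExp b t u =
      exp (-(a * (s - min s t) + b * (t - min s t))) / (a + b) := by
  rw [causalExp_mul_causalExp, integral_indicator measurableSet_Iic, integral_const_mul,
    integral_exp_mul_Iic hab, mul_div_assoc', ← exp_add]
  ring_nf

lemma memLp_causalExp (ha : 0 < a) (s : ℝ) : MemLp (causalExp a s) 2 := by
  refine (memLp_two_iff_integrable_sq ?_).2 ?_
  · exact ((by fun_prop : Measurable fun u => exp (a * (u - s))).indicator
      measurableSet_Iic).aestronglyMeasurable
  · simpa only [sq] using integrable_causalExp_mul (add_pos ha ha) s s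

noncomputable def causalExpL2 (ha : 0 < a) (s : ℝ) : Lp ℝ 2 (volume : Measure ℝ) :=
  (memLp_causalExp ha s).toLp

lemma inner_causalExpL2 (ha : 0 < a) (hb : 0 < b) (s t : ℝ) :
    ⟪causalExpL2 ha s, causalExpL2 hb t⟫_ℝ =
      exp (-(a * (s - min s t) + b * (t - min s t))) / (a + b) := by
  rw [L2.inner_def, ← integral_causalExp_mul (add_pos ha hb)]
  refine integral_congr_ae ?_
  filter_upwards [(memLp_causalExp ha s).coeFn_toLp, (memLp_causalExp hb t).coeFn_toLp]
    with u hs ht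
  simp [causalExpL2, hs, ht, mul_comm]

lemma inner_causalExpL2_self (ha : 0 < a) (s t : ℝ) :
    ⟪causalExpL2 ha s, causalExpL2 ha t⟫_ℝ = exp (-a * |s - t|) / (2 * a) := by
  have h : s - min s t + (t - min s t) = |s - t| := by
    linarith [max_sub_min_eq_abs' s t, min_add_max s t]
  rw [inner_causalExpL2, ← h]
  ring_nf

lemma inner_causalExpL2_add_inner_swap (ha : 0 < a) (hb : 0 < b) (s t : ℝ) :
    ⟪causalExpL2 ha s, causalExpL2 hb t⟫_ℝ + ⟪causalExpL2 hb s, causalExpL2 ha t⟫_ℝ =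
      (exp (-a * |s - t|) + exp (-b * |s - t|)) / (a + b) := by
  rw [inner_causalExpL2, inner_causalExpL2, add_comm b a, ← add_div]
  rcases le_total s t with h | h
  · rw [min_eq_left h, abs_of_nonpos (sub_nonpos.2 h)]
    ring_nf
  · rw [min_eq_right h, abs_of_nonneg (sub_nonneg.2 h)]
    ring_nf

lemma Ccov_eq_inner_add_inner {κ η : ℝ} (hη : 0 < η) (hκη : η < κ) (σ ν s t : ℝ) :
    Ccov κ η σ ν (s - t) =
      ⟪σ • causalExpL2 (hη.trans hκη) s, σ • causalExpL2 (hη.trans hκη) t⟫_ℝ +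
        ⟪(κ * ν / (κ - η)) • (causalExpL2 hη s - causalExpL2 (hη.trans hκη) s),
          (κ * ν / (κ - η)) • (causalExpL2 hη t - causalExpL2 (hη.trans hκη) t)⟫_ℝ := by
  have hκ := hη.trans hκη
  have hcross := inner_causalExpL2_add_inner_swap hη hκ s t
  simp only [real_inner_smul_left, real_inner_smul_right, inner_sub_left, inner_sub_right,
    inner_causalExpL2_self]
  have : κ - η ≠ 0 := by linarith
  have : κ ^ 2 - η ^ 2 ≠ 0 := by nlinarith
  rw [Ccov]
  linear_combination (norm := skip) (κ * ν / (κ - η)) ^ 2 * hcross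
  field_simp
  ring

theorem Ccov_posSemidef_general
    (κ η σ ν : ℝ) (hη : 0 < η) (hκη : η < κ) (hσ : 0 < σ) :
    (∀ (d : ℕ) (t : Fin d → ℝ),
        (Matrix.of fun i j => Ccov κ η σ ν (t i - t j)).PosSemidef)
      ∧ 0 < Ccov κ η σ ν 0 := by
  have hκ := hη.trans hκη
  set F : ℝ → Lp ℝ 2 (volume : Measure ℝ) := fun s => σ • causalExpL2 hκ s
  set G : ℝ → Lp ℝ 2 (volume : Measure ℝ) := fun s =>
    (κ * ν / (κ - η)) • (causalExpL2 hη s - causalExpL2 hκ s)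
  have hC (s t : ℝ) : Ccov κ η σ ν (s - t) = ⟪F s, F t⟫_ℝ + ⟪G s, G t⟫_ℝ :=
    Ccov_eq_inner_add_inner hη hκη σ ν s t
  refine ⟨fun d t => ?_, ?_⟩
  · have hgram : (Matrix.of fun i j => Ccov κ η σ ν (t i - t j)) =
        Matrix.gram ℝ (F ∘ t) + Matrix.gram ℝ (G ∘ t) := by
      ext i j
      simp only [hC, Matrix.of_apply, Matrix.add_apply, Matrix.gram_apply, Function.comp_apply]
    rw [hgram]
    exact (Matrix.posSemidef_gram ℝ _).add (Matrix.posSemidef_gram ℝ _)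
  · have hF : ⟪F 0, F 0⟫_ℝ = σ ^ 2 / (2 * κ) := by
      simp only [F, real_inner_smul_left, real_inner_smul_right, inner_causalExpL2_self,
        sub_self, abs_zero, mul_zero, exp_zero]
      field_simp
    calc 0 < σ ^ 2 / (2 * κ) := by positivity
      _ ≤ ⟪F 0, F 0⟫_ℝ + ⟪G 0, G 0⟫_ℝ :=
        hF ▸ le_add_of_nonneg_right real_inner_self_nonneg
      _ = Ccov κ η σ ν 0 := by simpa using (hC 0 0).symm

/-- The stationary covariance function of the nested OU process is a
positive semidefinite function on `ℝ`; in particular the variance `C(0)` is positive. -/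
theorem Ccov_posSemidef
    (κ η σ ν : ℝ) (hη : 0 < η) (hκη : η < κ) (hσ : 0 < σ) (hν : 0 < ν) :
    (∀ (d : ℕ) (t : Fin d → ℝ),
        (Matrix.of fun i j => Ccov κ η σ ν (t i - t j)).PosSemidef)
      ∧ 0 < Ccov κ η σ ν 0 :=
  Ccov_posSemidef_general κ η σ ν hη hκη hσ
end

section
/- Let u(t,x,y⁰,y¹,S,Û) = −exp(−γ(x + y⁰ + y¹S + θ(t,y¹,S,Û))). Then u solves the HJB equation 0 = ∂_t u − κ(S−Û)∂_S u − η(Û−Ū)∂_Û u + (σ²/2)∂²_{SS}u + (ν̂²/2)∂²_{ÛÛ}u + σν̂ ∂²_{SÛ}u + ∫ sup_δ Λ^{0,1}(z,δ)(u(t,x+zδ,y⁰+zS,y¹−z,S,Û) − u) m^{0,1}(dz) + ∫ sup_δ Λ^{1,0}(z,δ)(u(t,x+zδ,y⁰−zS,y¹+z,S,Û) − u) m^{1,0}(dz) with terminal condition u(T,·) = −e^{−γ(x+y⁰+y¹S)} if and only if θ solves 0 = ∂_t θ − κ(S−Û)(y+∂_Sθ) − η(Û−Ū)∂_Ûθ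 + (σ²/2)∂²_{SS}θ + (ν̂²/2)∂²_{ÛÛ}θ + σν̂∂²_{SÛ}θ − (γ/2)(σ(y+∂_Sθ) + ν̂∂_Ûθ)² + ∫ z H^{0,1}(z, (θ(t,y,S,Û)−θ(t,y−z,S,Û))/z) m^{0,1}(dz) + ∫ z H^{1,0}(z, (θ(t,y,S,Û)−θ(t,y+z,S,Û))/z) m^{1,0}(dz) with θ(T,·)=0, where H^{i,j}(z,p) = sup_δ (Λ^{i,j}(z,δ)/(γz))(1 − e^{−γz(δ−p)}). -/
open MeasureTheory Real

private lemma negexp_hasDerivAt {γ h' t : ℝ} {h : ℝ → ℝ} (H : HasDerivAt h h' t) :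
    HasDerivAt (fun s => -Real.exp (-γ * h s)) (γ * h' * Real.exp (-γ * h t)) t := by
  have h2 : HasDerivAt (fun s => -Real.exp (-γ * h s)) _ t := ((H.const_mul (-γ)).exp).neg
  convert h2 using 1; ring

private lemma posexp_hasDerivAt {γ h' t : ℝ} {h : ℝ → ℝ} (H : HasDerivAt h h' t) :
    HasDerivAt (fun s => Real.exp (-γ * h s)) (-γ * h' * Real.exp (-γ * h t)) t := by
  have h2 := ((H.const_mul (-γ)).exp)
  convert h2 using 1; ring

private lemma sup_term (γ z A B δ Λ θa θb : ℝ) (hγ : 0 < γ) (hz : 0 < z)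
    (hB : B = A + z * δ + (θb - θa)) :
    Λ * (-Real.exp (-γ * B) - -Real.exp (-γ * A))
      = γ * Real.exp (-γ * A)
        * (z * (Λ / (γ * z) * (1 - Real.exp (-γ * z * (δ - (θa - θb) / z))))) := by
  have hz0 : z ≠ 0 := hz.ne'
  have hγ0 : γ ≠ 0 := hγ.ne'
  subst hB
  have e1 : Real.exp (-γ * (A + z * δ + (θb - θa)))
      = Real.exp (-γ * A) * Real.exp (-γ * z * (δ - (θa - θb) / z)) := by
    rw [← Real.exp_add]; congr 1; field_simp; ring
  rw [e1]; field_simp; ring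


/-- With the exponential-utility ansatz
`u(t,x,y⁰,y¹,S,Û) = -exp(-γ(x + y⁰ + y¹S + θ(t,y¹,S,Û)))`, the function `u` solves the
HJB equation with terminal condition `u(T,·) = -e^{-γ(x+y⁰+y¹S)}` if and only if `θ`
solves the reduced equation with the Hamiltonians
`H^{i,j}(z,p) = sup_δ (Λ^{i,j}(z,δ)/(γz))(1 - e^{-γz(δ-p)})` and terminal condition
`θ(T,·) = 0`. -/
theorem hjb_ansatz_equivalence
    (T γ κ η σ νh Ubar : ℝ) (hT : 0 < T) (hγ : 0 < γ) (hκ : 0 < κ) (hη : 0 < η)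
    (hσ : 0 < σ) (hνh : 0 < νh)
    (Λ01 Λ10 : ℝ → ℝ → ℝ) (m01 m10 : Measure ℝ)
    (hm01 : m01 (Set.Iic 0) = 0) (hm10 : m10 (Set.Iic 0) = 0)
    (θ : ℝ → ℝ → ℝ → ℝ → ℝ)
    (hθ : ContDiff ℝ (⊤ : ℕ∞) (fun p : ℝ × ℝ × ℝ × ℝ => θ p.1 p.2.1 p.2.2.1 p.2.2.2)) :
    ((∀ t x y0 y1 Sp Uh : ℝ, (0:ℝ)
        = deriv (fun t' => -Real.exp (-γ * (x + y0 + y1 * Sp + θ t' y1 Sp Uh))) t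
          - κ * (Sp - Uh)
            * deriv (fun S' => -Real.exp (-γ * (x + y0 + y1 * S' + θ t y1 S' Uh))) Sp
          - η * (Uh - Ubar)
            * deriv (fun U' => -Real.exp (-γ * (x + y0 + y1 * Sp + θ t y1 Sp U'))) Uh
          + σ ^ 2 / 2 * deriv (fun S' =>
              deriv (fun S'' => -Real.exp (-γ * (x + y0 + y1 * S'' + θ t y1 S'' Uh))) S') Sp
          + νh ^ 2 / 2 * deriv (fun U' =>
              deriv (fun U'' => -Real.exp (-γ * (x + y0 + y1 * Sp + θ t y1 Sp U''))) U') Uh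
          + σ * νh * deriv (fun U' =>
              deriv (fun S' => -Real.exp (-γ * (x + y0 + y1 * S' + θ t y1 S' U'))) Sp) Uh
          + ∫ z, (⨆ δ : ℝ, Λ01 z δ *
              (-Real.exp (-γ * ((x + z * δ) + (y0 + z * Sp) + (y1 - z) * Sp
                  + θ t (y1 - z) Sp Uh))
                - -Real.exp (-γ * (x + y0 + y1 * Sp + θ t y1 Sp Uh)))) ∂m01
          + ∫ z, (⨆ δ : ℝ, Λ10 z δ *
              (-Real.exp (-γ * ((x + z * δ) + (y0 - z * Sp) + (y1 + z) * Sp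
                  + θ t (y1 + z) Sp Uh))
                - -Real.exp (-γ * (x + y0 + y1 * Sp + θ t y1 Sp Uh)))) ∂m10)
      ∧ (∀ x y0 y1 Sp Uh : ℝ,
          -Real.exp (-γ * (x + y0 + y1 * Sp + θ T y1 Sp Uh))
            = -Real.exp (-γ * (x + y0 + y1 * Sp))))
    ↔
    ((∀ t y Sp Uh : ℝ, (0:ℝ)
        = deriv (fun t' => θ t' y Sp Uh) t
          - κ * (Sp - Uh) * (y + deriv (fun S' => θ t y S' Uh) Sp)
          - η * (Uh - Ubar) * deriv (fun U' => θ t y Sp U') Uh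
          + σ ^ 2 / 2 * deriv (fun S' => deriv (fun S'' => θ t y S'' Uh) S') Sp
          + νh ^ 2 / 2 * deriv (fun U' => deriv (fun U'' => θ t y Sp U'') U') Uh
          + σ * νh * deriv (fun U' => deriv (fun S' => θ t y S' U') Sp) Uh
          - γ / 2 * (σ * (y + deriv (fun S' => θ t y S' Uh) Sp)
              + νh * deriv (fun U' => θ t y Sp U') Uh) ^ 2
          + ∫ z, z * (⨆ δ : ℝ, Λ01 z δ / (γ * z)
              * (1 - Real.exp (-γ * z * (δ - (θ t y Sp Uh - θ t (y - z) Sp Uh) / z)))) ∂m01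
          + ∫ z, z * (⨆ δ : ℝ, Λ10 z δ / (γ * z)
              * (1 - Real.exp (-γ * z * (δ - (θ t y Sp Uh - θ t (y + z) Sp Uh) / z)))) ∂m10)
      ∧ (∀ y Sp Uh : ℝ, θ T y Sp Uh = 0)) := by
  -- slice smoothness
  have hsT : ∀ y S U, ContDiff ℝ (⊤ : ℕ∞) (fun t' : ℝ => θ t' y S U) := fun y S U =>
    hθ.comp ((contDiff_id (E := ℝ)).prodMk (contDiff_const (c := (y, S, U))))
  have hsS : ∀ t y U, ContDiff ℝ (⊤ : ℕ∞) (fun S' : ℝ => θ t y S' U) := fun t y U =>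
    hθ.comp ((contDiff_const (c := t)).prodMk ((contDiff_const (c := y)).prodMk
      ((contDiff_id (E := ℝ)).prodMk (contDiff_const (c := U)))))
  have hsU : ∀ t y S, ContDiff ℝ (⊤ : ℕ∞) (fun U' : ℝ => θ t y S U') := fun t y S =>
    hθ.comp ((contDiff_const (c := t)).prodMk ((contDiff_const (c := y)).prodMk
      ((contDiff_const (c := S)).prodMk (contDiff_id (E := ℝ)))))
  have hsSU : ∀ t y, ContDiff ℝ (⊤ : ℕ∞) (fun p : ℝ × ℝ => θ t y p.1 p.2) := fun t y =>
    hθ.comp ((contDiff_const (c := t)).prodMk ((contDiff_const (c := y)).prodMk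
      (contDiff_id (E := ℝ × ℝ))))
  have hψ : ∀ t y Sp, Differentiable ℝ (fun U' => deriv (fun S' => θ t y S' U') Sp) := by
    intro t y Sp
    have hφ := hsSU t y
    have hrepr : (fun U' => deriv (fun S' => θ t y S' U') Sp)
        = fun U' => (fderiv ℝ (fun p : ℝ × ℝ => θ t y p.1 p.2) (Sp, U')) (1, 0) := by
      funext U'
      have hcomp : HasDerivAt (fun S' : ℝ => (S', U')) ((1:ℝ), (0:ℝ)) Sp :=
        (hasDerivAt_id Sp).prodMk (hasDerivAt_const Sp U')
      exact ((hφ.differentiable (by simp) (Sp, U')).hasFDerivAt.comp_hasDerivAt Sp hcomp).deriv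
    rw [hrepr]
    have hc : ContDiff ℝ (⊤ : ℕ∞) (fun q : ℝ × ℝ =>
        (fderiv ℝ (fun p : ℝ × ℝ => θ t y p.1 p.2) q) (1, 0)) :=
      (hφ.fderiv_right (by simp)).clm_apply contDiff_const
    exact (hc.differentiable (by simp)).comp ((differentiable_const Sp).prodMk differentiable_id)
  have hdS : ∀ t y U, Differentiable ℝ (deriv (fun S' : ℝ => θ t y S' U)) := fun t y U =>
    ((contDiff_infty_iff_deriv.mp ((hsS t y U).of_le (by simp))).2).differentiable
      (by simp)
  have hdU : ∀ t y S, Differentiable ℝ (deriv (fun U' : ℝ => θ t y S U')) := fun t y S =>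
    ((contDiff_infty_iff_deriv.mp ((hsU t y S).of_le (by simp))).2).differentiable
      (by simp)
  -- a.e. positivity
  have hae01 : ∀ᵐ z ∂m01, 0 < z := by
    rw [ae_iff]
    have h : {z : ℝ | ¬ 0 < z} = Set.Iic 0 := by ext z; simp
    rw [h]; exact hm01
  have hae10 : ∀ᵐ z ∂m10, 0 < z := by
    rw [ae_iff]
    have h : {z : ℝ | ¬ 0 < z} = Set.Iic 0 := by ext z; simp
    rw [h]; exact hm10
  -- key pointwise identity
  have key : ∀ t x y0 y1 Sp Uh : ℝ,
      (deriv (fun t' => -Real.exp (-γ * (x + y0 + y1 * Sp + θ t' y1 Sp Uh))) t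
          - κ * (Sp - Uh)
            * deriv (fun S' => -Real.exp (-γ * (x + y0 + y1 * S' + θ t y1 S' Uh))) Sp
          - η * (Uh - Ubar)
            * deriv (fun U' => -Real.exp (-γ * (x + y0 + y1 * Sp + θ t y1 Sp U'))) Uh
          + σ ^ 2 / 2 * deriv (fun S' =>
              deriv (fun S'' => -Real.exp (-γ * (x + y0 + y1 * S'' + θ t y1 S'' Uh))) S') Sp
          + νh ^ 2 / 2 * deriv (fun U' =>
              deriv (fun U'' => -Real.exp (-γ * (x + y0 + y1 * Sp + θ t y1 Sp U''))) U') Uh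
          + σ * νh * deriv (fun U' =>
              deriv (fun S' => -Real.exp (-γ * (x + y0 + y1 * S' + θ t y1 S' U'))) Sp) Uh
          + ∫ z, (⨆ δ : ℝ, Λ01 z δ *
              (-Real.exp (-γ * ((x + z * δ) + (y0 + z * Sp) + (y1 - z) * Sp
                  + θ t (y1 - z) Sp Uh))
                - -Real.exp (-γ * (x + y0 + y1 * Sp + θ t y1 Sp Uh)))) ∂m01
          + ∫ z, (⨆ δ : ℝ, Λ10 z δ *
              (-Real.exp (-γ * ((x + z * δ) + (y0 - z * Sp) + (y1 + z) * Sp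
                  + θ t (y1 + z) Sp Uh))
                - -Real.exp (-γ * (x + y0 + y1 * Sp + θ t y1 Sp Uh)))) ∂m10)
      = γ * Real.exp (-γ * (x + y0 + y1 * Sp + θ t y1 Sp Uh)) *
        (deriv (fun t' => θ t' y1 Sp Uh) t
          - κ * (Sp - Uh) * (y1 + deriv (fun S' => θ t y1 S' Uh) Sp)
          - η * (Uh - Ubar) * deriv (fun U' => θ t y1 Sp U') Uh
          + σ ^ 2 / 2 * deriv (fun S' => deriv (fun S'' => θ t y1 S'' Uh) S') Sp
          + νh ^ 2 / 2 * deriv (fun U' => deriv (fun U'' => θ t y1 Sp U'') U') Uh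
          + σ * νh * deriv (fun U' => deriv (fun S' => θ t y1 S' U') Sp) Uh
          - γ / 2 * (σ * (y1 + deriv (fun S' => θ t y1 S' Uh) Sp)
              + νh * deriv (fun U' => θ t y1 Sp U') Uh) ^ 2
          + ∫ z, z * (⨆ δ : ℝ, Λ01 z δ / (γ * z)
              * (1 - Real.exp (-γ * z * (δ - (θ t y1 Sp Uh - θ t (y1 - z) Sp Uh) / z)))) ∂m01
          + ∫ z, z * (⨆ δ : ℝ, Λ10 z δ / (γ * z)
              * (1 - Real.exp (-γ * z * (δ - (θ t y1 Sp Uh - θ t (y1 + z) Sp Uh) / z)))) ∂m10) := by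
    intro t x y0 y1 Sp Uh
    -- HasDerivAt facts
    have HS : ∀ (s U' : ℝ), HasDerivAt (fun S' => x + y0 + y1 * S' + θ t y1 S' U')
        (y1 * 1 + deriv (fun S' => θ t y1 S' U') s) s := fun s U' =>
      (((hasDerivAt_id s).const_mul y1).const_add (x + y0)).add
        (((hsS t y1 U').differentiable (by simp) s).hasDerivAt)
    have HU : ∀ s : ℝ, HasDerivAt (fun U' => x + y0 + y1 * Sp + θ t y1 Sp U')
        (deriv (fun U' => θ t y1 Sp U') s) s := fun s =>
      (((hsU t y1 Sp).differentiable (by simp) s).hasDerivAt).const_add (x + y0 + y1 * Sp)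
    have HT : HasDerivAt (fun t' => x + y0 + y1 * Sp + θ t' y1 Sp Uh)
        (deriv (fun t' => θ t' y1 Sp Uh) t) t :=
      (((hsT y1 Sp Uh).differentiable (by simp) t).hasDerivAt).const_add (x + y0 + y1 * Sp)
    have e1 : deriv (fun t' => -Real.exp (-γ * (x + y0 + y1 * Sp + θ t' y1 Sp Uh))) t
        = γ * deriv (fun t' => θ t' y1 Sp Uh) t
          * Real.exp (-γ * (x + y0 + y1 * Sp + θ t y1 Sp Uh)) :=
      (negexp_hasDerivAt HT).deriv
    have e2 : deriv (fun S' => -Real.exp (-γ * (x + y0 + y1 * S' + θ t y1 S' Uh))) Sp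
        = γ * (y1 * 1 + deriv (fun S' => θ t y1 S' Uh) Sp)
          * Real.exp (-γ * (x + y0 + y1 * Sp + θ t y1 Sp Uh)) :=
      (negexp_hasDerivAt (HS Sp Uh)).deriv
    have e3 : deriv (fun U' => -Real.exp (-γ * (x + y0 + y1 * Sp + θ t y1 Sp U'))) Uh
        = γ * deriv (fun U' => θ t y1 Sp U') Uh
          * Real.exp (-γ * (x + y0 + y1 * Sp + θ t y1 Sp Uh)) :=
      (negexp_hasDerivAt (HU Uh)).deriv
    -- second derivative in S
    have efunS : (fun S' =>
        deriv (fun S'' => -Real.exp (-γ * (x + y0 + y1 * S'' + θ t y1 S'' Uh))) S')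
        = (fun S' => γ * (y1 * 1 + deriv (fun S'' => θ t y1 S'' Uh) S')
            * Real.exp (-γ * (x + y0 + y1 * S' + θ t y1 S' Uh))) :=
      funext fun S' => (negexp_hasDerivAt (HS S' Uh)).deriv
    have e4 : deriv (fun S' =>
        deriv (fun S'' => -Real.exp (-γ * (x + y0 + y1 * S'' + θ t y1 S'' Uh))) S') Sp
        = γ * (0 + deriv (fun S' => deriv (fun S'' => θ t y1 S'' Uh) S') Sp)
            * Real.exp (-γ * (x + y0 + y1 * Sp + θ t y1 Sp Uh))
          + γ * (y1 * 1 + deriv (fun S'' => θ t y1 S'' Uh) Sp)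
            * (-γ * (y1 * 1 + deriv (fun S' => θ t y1 S' Uh) Sp)
              * Real.exp (-γ * (x + y0 + y1 * Sp + θ t y1 Sp Uh))) := by
      rw [efunS]
      have HA : HasDerivAt (fun S' => γ * (y1 * 1 + deriv (fun S'' => θ t y1 S'' Uh) S'))
          (γ * (0 + deriv (fun S' => deriv (fun S'' => θ t y1 S'' Uh) S') Sp)) Sp :=
        ((hasDerivAt_const Sp (y1 * 1)).add ((hdS t y1 Uh Sp).hasDerivAt)).const_mul γ
      have HB : HasDerivAt
          (fun S' => Real.exp (-γ * (x + y0 + y1 * S' + θ t y1 S' Uh)))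
          (-γ * (y1 * 1 + deriv (fun S' => θ t y1 S' Uh) Sp)
            * Real.exp (-γ * (x + y0 + y1 * Sp + θ t y1 Sp Uh))) Sp :=
        posexp_hasDerivAt (HS Sp Uh)
      exact (HA.mul HB).deriv
    -- second derivative in U
    have efunU : (fun U' =>
        deriv (fun U'' => -Real.exp (-γ * (x + y0 + y1 * Sp + θ t y1 Sp U''))) U')
        = (fun U' => γ * deriv (fun U'' => θ t y1 Sp U'') U'
            * Real.exp (-γ * (x + y0 + y1 * Sp + θ t y1 Sp U'))) :=
      funext fun U' => (negexp_hasDerivAt (HU U')).deriv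
    have e5 : deriv (fun U' =>
        deriv (fun U'' => -Real.exp (-γ * (x + y0 + y1 * Sp + θ t y1 Sp U''))) U') Uh
        = γ * deriv (fun U' => deriv (fun U'' => θ t y1 Sp U'') U') Uh
            * Real.exp (-γ * (x + y0 + y1 * Sp + θ t y1 Sp Uh))
          + γ * deriv (fun U'' => θ t y1 Sp U'') Uh
            * (-γ * deriv (fun U' => θ t y1 Sp U') Uh
              * Real.exp (-γ * (x + y0 + y1 * Sp + θ t y1 Sp Uh))) := by
      rw [efunU]
      have HA : HasDerivAt (fun U' => γ * deriv (fun U'' => θ t y1 Sp U'') U')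
          (γ * deriv (fun U' => deriv (fun U'' => θ t y1 Sp U'') U') Uh) Uh :=
        ((hdU t y1 Sp Uh).hasDerivAt).const_mul γ
      have HB : HasDerivAt
          (fun U' => Real.exp (-γ * (x + y0 + y1 * Sp + θ t y1 Sp U')))
          (-γ * deriv (fun U' => θ t y1 Sp U') Uh
            * Real.exp (-γ * (x + y0 + y1 * Sp + θ t y1 Sp Uh))) Uh :=
        posexp_hasDerivAt (HU Uh)
      exact (HA.mul HB).deriv
    -- mixed derivative
    have efunSU : (fun U' =>
        deriv (fun S' => -Real.exp (-γ * (x + y0 + y1 * S' + θ t y1 S' U'))) Sp)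
        = (fun U' => γ * (y1 * 1 + deriv (fun S' => θ t y1 S' U') Sp)
            * Real.exp (-γ * (x + y0 + y1 * Sp + θ t y1 Sp U'))) :=
      funext fun U' => (negexp_hasDerivAt (HS Sp U')).deriv
    have e6 : deriv (fun U' =>
        deriv (fun S' => -Real.exp (-γ * (x + y0 + y1 * S' + θ t y1 S' U'))) Sp) Uh
        = γ * (0 + deriv (fun U' => deriv (fun S' => θ t y1 S' U') Sp) Uh)
            * Real.exp (-γ * (x + y0 + y1 * Sp + θ t y1 Sp Uh))
          + γ * (y1 * 1 + deriv (fun S' => θ t y1 S' Uh) Sp)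
            * (-γ * deriv (fun U' => θ t y1 Sp U') Uh
              * Real.exp (-γ * (x + y0 + y1 * Sp + θ t y1 Sp Uh))) := by
      rw [efunSU]
      have HA : HasDerivAt (fun U' => γ * (y1 * 1 + deriv (fun S' => θ t y1 S' U') Sp))
          (γ * (0 + deriv (fun U' => deriv (fun S' => θ t y1 S' U') Sp) Uh)) Uh :=
        ((hasDerivAt_const Uh (y1 * 1)).add ((hψ t y1 Sp Uh).hasDerivAt)).const_mul γ
      have HB : HasDerivAt
          (fun U' => Real.exp (-γ * (x + y0 + y1 * Sp + θ t y1 Sp U')))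
          (-γ * deriv (fun U' => θ t y1 Sp U') Uh
            * Real.exp (-γ * (x + y0 + y1 * Sp + θ t y1 Sp Uh))) Uh :=
        posexp_hasDerivAt (HU Uh)
      exact (HA.mul HB).deriv
    -- integrals
    have hEpos : (0:ℝ) ≤ γ * Real.exp (-γ * (x + y0 + y1 * Sp + θ t y1 Sp Uh)) := by
      positivity
    have i01 : (∫ z, (⨆ δ : ℝ, Λ01 z δ *
              (-Real.exp (-γ * ((x + z * δ) + (y0 + z * Sp) + (y1 - z) * Sp
                  + θ t (y1 - z) Sp Uh))
                - -Real.exp (-γ * (x + y0 + y1 * Sp + θ t y1 Sp Uh)))) ∂m01)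
        = γ * Real.exp (-γ * (x + y0 + y1 * Sp + θ t y1 Sp Uh))
          * ∫ z, z * (⨆ δ : ℝ, Λ01 z δ / (γ * z)
              * (1 - Real.exp (-γ * z
                  * (δ - (θ t y1 Sp Uh - θ t (y1 - z) Sp Uh) / z)))) ∂m01 := by
      rw [← integral_const_mul]
      refine integral_congr_ae ?_
      filter_upwards [hae01] with z hz
      rw [Real.mul_iSup_of_nonneg hz.le, Real.mul_iSup_of_nonneg hEpos]
      exact iSup_congr fun δ => sup_term γ z _ _ δ _ _ _ hγ hz (by ring)
    have i10 : (∫ z, (⨆ δ : ℝ, Λ10 z δ *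
              (-Real.exp (-γ * ((x + z * δ) + (y0 - z * Sp) + (y1 + z) * Sp
                  + θ t (y1 + z) Sp Uh))
                - -Real.exp (-γ * (x + y0 + y1 * Sp + θ t y1 Sp Uh)))) ∂m10)
        = γ * Real.exp (-γ * (x + y0 + y1 * Sp + θ t y1 Sp Uh))
          * ∫ z, z * (⨆ δ : ℝ, Λ10 z δ / (γ * z)
              * (1 - Real.exp (-γ * z
                  * (δ - (θ t y1 Sp Uh - θ t (y1 + z) Sp Uh) / z)))) ∂m10 := by
      rw [← integral_const_mul]
      refine integral_congr_ae ?_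
      filter_upwards [hae10] with z hz
      rw [Real.mul_iSup_of_nonneg hz.le, Real.mul_iSup_of_nonneg hEpos]
      exact iSup_congr fun δ => sup_term γ z _ _ δ _ _ _ hγ hz (by ring)
    rw [e1, e2, e3, e4, e5, e6, i01, i10]
    ring
  constructor
  · rintro ⟨h1, h2⟩
    constructor
    · intro t y Sp Uh
      have h0 := h1 t 0 0 y Sp Uh
      rw [key t 0 0 y Sp Uh] at h0
      have hne : γ * Real.exp (-γ * (0 + 0 + y * Sp + θ t y Sp Uh)) ≠ 0 := by positivity
      rcases mul_eq_zero.mp h0.symm with h | h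
      · exact absurd h hne
      · exact h.symm
    · intro y Sp Uh
      have h3 := h2 0 0 y Sp Uh
      have h4 : -γ * (0 + 0 + y * Sp + θ T y Sp Uh) = -γ * (0 + 0 + y * Sp) :=
        Real.exp_eq_exp.mp (neg_inj.mp h3)
      have h5 := mul_left_cancel₀ (neg_ne_zero.mpr hγ.ne') h4
      linarith
  · rintro ⟨h1, h2⟩
    constructor
    · intro t x y0 y1 Sp Uh
      rw [key t x y0 y1 Sp Uh, ← h1 t y1 Sp Uh, mul_zero]
    · intro x y0 y1 Sp Uh
      rw [h2 y1 Sp Uh, add_zero]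
end
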